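/- arXiv:2010.03698 — 2 statements merged into one kernel-verified Lean document; each statement's English description precedes it below -/
import Mathlib

section
/- Let ξ > 0, δ > 0, b ≥ 0 an integer, and f_{d,l} as above. There exists N₀ such that for all N > N₀ and all l with 1 ≤ l ≤ 2N−2 satisfying cosh(lξ/N) < cosh(2ξ) − 1/2 − δ, one has f_{N−1,l−1} < f_{N−1,l}. -/
/-! Each step `l ↦ l + 1` multiplies `f_{d,l}` by `4 sinh(A) sinh(B)` with `A + B = (2d+1)ξ/N` and
`A - B = (l+1)ξ/N`, which equals `2 (cosh((2d+1)ξ/N) - cosh((l+1)ξ/N))`. So `f` grows exactly when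
`cosh((l+1)ξ/N) < cosh((2d+1)ξ/N) - 1/2`. For `d = N - 1` the argument `(2N-1)ξ/N = 2ξ - ξ/N` tends
to `2ξ`, and the margin `δ` absorbs the difference once `N` is large. -/

noncomputable def arcosh (x : ℝ) : ℝ := Real.log (x + Real.sqrt (x^2 - 1))

noncomputable def kappa : ℝ := arcosh (3/2) / 2

noncomputable def f (ξ : ℝ) (b N d l : ℕ) : ℝ :=
  Real.exp ((2*(b:ℝ)+1) * ((d:ℝ)^2 + (d:ℝ)) * ξ / (2*(N:ℝ))) *
    (2 * Real.sinh ((2*(d:ℝ)+1) * ξ / (2*(N:ℝ)))) *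
  ∏ k ∈ Finset.Icc 1 l,
    (4 * Real.sinh ((2*(d:ℝ)+1+(k:ℝ)) * ξ / (2*(N:ℝ))) *
       Real.sinh ((2*(d:ℝ)+1-(k:ℝ)) * ξ / (2*(N:ℝ))))

open Real

lemma four_mul_sinh_mul_sinh (a b : ℝ) :
    4 * sinh a * sinh b = 2 * (cosh (a + b) - cosh (a - b)) := by
  rw [cosh_add, cosh_sub]; ring

section

variable {ξ : ℝ} {b N d : ℕ}

lemma f_succ (l : ℕ) :
    f ξ b N d (l + 1) = f ξ b N d l *
      (4 * sinh ((2*(d:ℝ)+1+((l:ℝ)+1)) * ξ / (2*(N:ℝ))) *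
        sinh ((2*(d:ℝ)+1-((l:ℝ)+1)) * ξ / (2*(N:ℝ)))) := by
  unfold f
  rw [Finset.prod_Icc_succ_top (by omega)]
  push_cast
  ring

lemma f_succ_factor_eq (hN : 0 < N) (l : ℕ) :
    4 * sinh ((2*(d:ℝ)+1+((l:ℝ)+1)) * ξ / (2*(N:ℝ))) *
        sinh ((2*(d:ℝ)+1-((l:ℝ)+1)) * ξ / (2*(N:ℝ))) =
      2 * (cosh ((2*(d:ℝ)+1) * ξ / N) - cosh (((l:ℝ)+1) * ξ / N)) := by
  have hN' : (N:ℝ) ≠ 0 := by positivity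
  rw [four_mul_sinh_mul_sinh]
  congr 3 <;> field_simp <;> ring

lemma f_pos (hξ : 0 < ξ) (hN : 0 < N) {l : ℕ} (hl : l ≤ 2 * d) : 0 < f ξ b N d l := by
  have sinh_pos_of_pos {x : ℝ} (hx : 0 < x) : 0 < sinh (x * ξ / (2*(N:ℝ))) :=
    sinh_pos_iff.2 (by positivity)
  refine mul_pos (mul_pos (exp_pos _) (mul_pos two_pos (sinh_pos_of_pos (by positivity))))
    (Finset.prod_pos fun k hk => ?_)
  have hk : (k:ℝ) < 2 * d + 1 := by
    have := (Finset.mem_Icc.mp hk).2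
    exact_mod_cast (show k < 2 * d + 1 by omega)
  exact mul_pos (mul_pos four_pos (sinh_pos_of_pos (by positivity)))
    (sinh_pos_of_pos (by linarith))

lemma f_lt_f_succ_iff (hξ : 0 < ξ) (hN : 0 < N) {l : ℕ} (hl : l ≤ 2 * d) :
    f ξ b N d l < f ξ b N d (l + 1) ↔
      cosh (((l:ℝ)+1) * ξ / N) < cosh ((2*(d:ℝ)+1) * ξ / N) - 1/2 := by
  rw [f_succ, f_succ_factor_eq hN, lt_mul_iff_one_lt_right (f_pos hξ hN hl)]
  constructor <;> intro h <;> linarith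

end

theorem stmt5 (ξ : ℝ) (hξ : 0 < ξ) (δ : ℝ) (hδ : 0 < δ) (b : ℕ) :
    ∃ N₀ : ℕ, ∀ N : ℕ, N₀ < N → ∀ l : ℕ, 1 ≤ l → l ≤ 2*N - 2 →
      Real.cosh ((l:ℝ) * ξ / (N:ℝ)) < Real.cosh (2*ξ) - 1/2 - δ →
      f ξ b N (N-1) (l-1) < f ξ b N (N-1) l := by
  have hlim : Filter.Tendsto (fun N : ℕ => cosh (2*ξ - ξ/N)) Filter.atTop (nhds (cosh (2*ξ))) := by
    have := (tendsto_const_nhds (x := ξ)).div_atTop tendsto_natCast_atTop_atTop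
    simpa [Function.comp_def] using (continuous_cosh.tendsto _).comp (tendsto_const_nhds.sub this)
  obtain ⟨N₀, hN₀⟩ := Filter.eventually_atTop.mp
    (hlim.eventually (eventually_gt_nhds (show cosh (2*ξ) - δ < cosh (2*ξ) by linarith)))
  refine ⟨N₀, fun N hN l hl1 hl2 hcosh => ?_⟩
  obtain ⟨m, rfl⟩ : ∃ m, l = m + 1 := ⟨l - 1, by omega⟩
  have hN0 : 0 < N := by omega
  have hd : (2*((N-1 : ℕ):ℝ)+1) * ξ / N = 2*ξ - ξ/N := by
    rw [Nat.cast_sub (by omega)]; field_simp; ring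
  rw [Nat.add_sub_cancel, f_lt_f_succ_iff hξ hN0 (by omega), hd]
  push_cast at hcosh
  linarith [hN₀ N hN.le]
end

section
/- For real u > κ := (1/2)·arccosh(3/2), exp(dS/du) = (cosh(4u) − cosh(2u) − 1 + sinh(2u)·√((2·cosh(2u)+1)(2·cosh(2u)−3)))², where S(u) := Li₂(e^{−φ(u)−2u}) − Li₂(e^{φ(u)−2u}) + 2u·φ(u) and φ(u) := arccosh(cosh(2u) − 1/2). -/
noncomputable def phi (ξ : ℝ) : ℝ := arcosh (Real.cosh (2*ξ) - 1/2)

noncomputable def Li2 (z : ℝ) : ℝ := ∑' n : ℕ, z^n / (n:ℝ)^2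

noncomputable def Sfun (u : ℝ) : ℝ :=
  Li2 (Real.exp (-phi u - 2*u)) - Li2 (Real.exp (phi u - 2*u)) + 2*u*(phi u)

/-!
Write `A = e^{-φ-2u}` and `B = e^{φ-2u}`. Since `cosh φ = cosh 2u - 1/2`,
`(1 - A)(1 - B) = 2 e^{-2u} (cosh 2u - cosh φ) = e^{-2u}`. By the chain rule
`d/du Li₂(e^g) = -log(1 - e^g) g'`, so the terms of `S'` containing `φ'` add up to
`φ' (log(1 - A) + log(1 - B) + 2u) = 0`, and `S' = 2 (2 log(1 - e^{-w}) + w)` with `w = φ + 2u`.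
Hence `exp (S' / 2) = (1 - e^{-w})² e^w = 2 cosh w - 2`, and expanding `cosh (φ + 2u)` with
`sinh φ = √((cosh 2u - 1/2)² - 1)` gives the stated square.
-/

open Real

-- `arcosh` is definitionally `Real.arcosh`, so Mathlib's lemmas apply to `kappa` and `phi`.
lemma kappa_eq_arcosh : kappa = Real.arcosh (3 / 2) / 2 := rfl

lemma kappa_pos : 0 < kappa := by
  rw [kappa_eq_arcosh]
  exact half_pos (arcosh_pos (by norm_num))

lemma three_halves_lt_cosh_two_mul {u : ℝ} (hu : kappa < u) : 3 / 2 < cosh (2 * u) := by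
  have hκ : cosh (2 * kappa) = 3 / 2 := by
    rw [kappa_eq_arcosh, mul_div_cancel₀ _ two_ne_zero, cosh_arcosh (by norm_num)]
  rw [← hκ, cosh_lt_cosh, abs_of_pos (by linarith [kappa_pos]),
    abs_of_pos (by linarith [kappa_pos])]
  linarith

section phi

variable {u : ℝ}

lemma cosh_phi (hu : 3 / 2 ≤ cosh (2 * u)) : cosh (phi u) = cosh (2 * u) - 1 / 2 :=
  cosh_arcosh (by linarith)

lemma sinh_phi (hu : 3 / 2 ≤ cosh (2 * u)) :
    sinh (phi u) = √((cosh (2 * u) - 1 / 2) ^ 2 - 1) :=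
  sinh_arcosh (by linarith)

lemma phi_nonneg (hu : 3 / 2 ≤ cosh (2 * u)) : 0 ≤ phi u :=
  arcosh_nonneg (by linarith)

lemma phi_lt_two_mul (hu : 0 < u) : phi u < 2 * u := by
  have hc := one_le_cosh (2 * u)
  calc phi u < Real.arcosh (cosh (2 * u)) :=
        (arcosh_lt_arcosh (by linarith) (by linarith)).2 (by linarith)
    _ = 2 * u := arcosh_cosh (by linarith)

lemma differentiableAt_phi (hu : 3 / 2 < cosh (2 * u)) : DifferentiableAt ℝ phi u :=
  (differentiableAt_arcosh (show cosh (2 * u) - 1 / 2 ∈ Set.Ioi 1 by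
    simp only [Set.mem_Ioi]; linarith)).comp u (by fun_prop)

end phi

section Li2

lemma hasDerivAt_pow_div_sq (n : ℕ) (y : ℝ) :
    HasDerivAt (fun y : ℝ => y ^ n / (n : ℝ) ^ 2) (y ^ (n - 1) / n) y := by
  refine ((hasDerivAt_pow n y).div_const ((n : ℝ) ^ 2)).congr_deriv ?_
  rcases eq_or_ne (n : ℝ) 0 with hn | hn
  · simp [hn]
  · field_simp

lemma hasDerivAt_Li2_tsum {z : ℝ} (hz : |z| < 1) :
    HasDerivAt Li2 (∑' n : ℕ, z ^ (n - 1) / n) z := by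
  obtain ⟨r, hzr, hr1⟩ := exists_between hz
  have hr0 : 0 < r := (abs_nonneg z).trans_lt hzr
  have hsum : Summable fun n : ℕ => r ^ (n - 1) :=
    (summable_nat_add_iff 1).1 (by simpa using summable_geometric_of_lt_one hr0.le hr1)
  have hsum0 : Summable fun n : ℕ => (0 : ℝ) ^ n / (n : ℝ) ^ 2 :=
    summable_zero.congr fun n => by rcases n with _ | n <;> simp
  refine hasDerivAt_tsum_of_isPreconnected hsum Metric.isOpen_ball
    (convex_ball (0 : ℝ) r).isPreconnected (fun n y _ => hasDerivAt_pow_div_sq n y) ?_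
    (Metric.mem_ball_self hr0) hsum0 (by rwa [mem_ball_zero_iff, Real.norm_eq_abs])
  intro n y hy
  rw [mem_ball_zero_iff, Real.norm_eq_abs] at hy
  rw [norm_div, norm_pow, Real.norm_eq_abs, RCLike.norm_natCast, div_eq_mul_inv]
  calc |y| ^ (n - 1) * (n : ℝ)⁻¹ ≤ |y| ^ (n - 1) * 1 := by
        gcongr; exact Nat.cast_inv_le_one n
    _ ≤ r ^ (n - 1) := by rw [mul_one]; gcongr

lemma hasSum_pow_pred_div {z : ℝ} (hz0 : z ≠ 0) (hz : |z| < 1) :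
    HasSum (fun n : ℕ => z ^ (n - 1) / n) (-log (1 - z) / z) := by
  rw [← hasSum_nat_add_iff' 1]
  simp only [Finset.range_one, Finset.sum_singleton, Nat.cast_zero, div_zero, sub_zero,
    Nat.add_sub_cancel, Nat.cast_add, Nat.cast_one]
  have h := (hasSum_pow_div_log_of_abs_lt_one hz).div_const z
  have hterm : (fun n : ℕ => z ^ (n + 1) / (n + 1) / z) = fun n : ℕ => z ^ n / (n + 1) := by
    ext n
    rw [pow_succ]
    field_simp
  rwa [hterm] at h

lemma hasDerivAt_Li2 {z : ℝ} (hz0 : z ≠ 0) (hz : |z| < 1) :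
    HasDerivAt Li2 (-log (1 - z) / z) z :=
  (hasSum_pow_pred_div hz0 hz).tsum_eq ▸ hasDerivAt_Li2_tsum hz

lemma hasDerivAt_Li2_exp {f : ℝ → ℝ} {f' u : ℝ} (hf : HasDerivAt f f' u) (hfu : f u < 0) :
    HasDerivAt (fun t => Li2 (exp (f t))) (-log (1 - exp (f u)) * f') u := by
  have hexp : |exp (f u)| < 1 := by
    rw [abs_of_pos (exp_pos _)]; exact exp_lt_one_iff.2 hfu
  refine ((hasDerivAt_Li2 (exp_pos _).ne' hexp).comp u hf.exp).congr_deriv ?_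
  field_simp

end Li2

lemma one_sub_exp_mul_one_sub_exp (p v : ℝ) :
    (1 - exp (-p - v)) * (1 - exp (p - v)) = 2 * exp (-v) * (cosh v - cosh p) := by
  simp only [cosh_eq, sub_eq_add_neg, exp_add, exp_neg]
  field_simp
  ring

lemma hasDerivAt_Sfun {u : ℝ} (hu0 : 0 < u) (hu : 3 / 2 < cosh (2 * u)) :
    HasDerivAt Sfun (2 * (2 * log (1 - exp (-(phi u + 2 * u))) + (phi u + 2 * u))) u := by
  have hφ := (differentiableAt_phi hu).hasDerivAt
  have hlin : HasDerivAt (fun t : ℝ => 2 * t) 2 u := by simpa using (hasDerivAt_id u).const_mul 2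
  have hA : HasDerivAt (fun t => -phi t - 2 * t) (-deriv phi u - 2) u := hφ.neg.sub hlin
  have hB : HasDerivAt (fun t => phi t - 2 * t) (deriv phi u - 2) u := hφ.sub hlin
  have hAneg : -phi u - 2 * u < 0 := by linarith [phi_nonneg hu.le]
  have hBneg : phi u - 2 * u < 0 := by linarith [phi_lt_two_mul hu0]
  have hprod : log (1 - exp (-phi u - 2 * u)) + log (1 - exp (phi u - 2 * u)) = -(2 * u) := by
    rw [← log_mul (sub_ne_zero.2 (exp_lt_one_iff.2 hAneg).ne')
      (sub_ne_zero.2 (exp_lt_one_iff.2 hBneg).ne'), one_sub_exp_mul_one_sub_exp, cosh_phi hu.le,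
      show ∀ c : ℝ, 2 * exp (-(2 * u)) * (c - (c - 1 / 2)) = exp (-(2 * u)) by intro; ring,
      log_exp]
  refine ((hasDerivAt_Li2_exp hA hAneg).sub (hasDerivAt_Li2_exp hB hBneg)).add
    (hlin.mul hφ) |>.congr_deriv ?_
  rw [neg_add']
  linear_combination (deriv phi u - 2) * hprod

lemma exp_two_mul_log_one_sub_exp_neg_add {w : ℝ} (hw : 0 < w) :
    exp (2 * log (1 - exp (-w)) + w) = 2 * cosh w - 2 := by
  have h1 : 0 < 1 - exp (-w) := by rw [sub_pos]; exact exp_lt_one_iff.2 (by linarith)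
  rw [exp_add, two_mul, exp_add, exp_log h1, cosh_eq, exp_neg]
  field_simp
  ring

lemma two_mul_cosh_phi_add_sub_two {u : ℝ} (hu : 3 / 2 ≤ cosh (2 * u)) :
    2 * cosh (phi u + 2 * u) - 2 = cosh (4 * u) - cosh (2 * u) - 1 +
      sinh (2 * u) * √((2 * cosh (2 * u) + 1) * (2 * cosh (2 * u) - 3)) := by
  have h4 : cosh (4 * u) = 2 * cosh (2 * u) ^ 2 - 1 := by
    rw [show 4 * u = 2 * (2 * u) by ring, cosh_two_mul, sinh_sq]; ring
  have hsqrt : √((2 * cosh (2 * u) + 1) * (2 * cosh (2 * u) - 3))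
      = 2 * √((cosh (2 * u) - 1 / 2) ^ 2 - 1) := by
    rw [show (2 * cosh (2 * u) + 1) * (2 * cosh (2 * u) - 3)
        = 2 ^ 2 * ((cosh (2 * u) - 1 / 2) ^ 2 - 1) by ring, sqrt_mul (by norm_num),
      sqrt_sq (by norm_num)]
  rw [cosh_add, cosh_phi hu, sinh_phi hu, h4, hsqrt]
  ring

theorem stmt19 (u : ℝ) (hu : kappa < u) :
    Real.exp (deriv Sfun u) =
      (Real.cosh (4*u) - Real.cosh (2*u) - 1 +
        Real.sinh (2*u) * Real.sqrt ((2*Real.cosh (2*u)+1) * (2*Real.cosh (2*u)-3)))^2 := by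
  have hu0 : 0 < u := kappa_pos.trans hu
  have hc := three_halves_lt_cosh_two_mul hu
  rw [(hasDerivAt_Sfun hu0 hc).deriv, two_mul, exp_add, ← sq,
    exp_two_mul_log_one_sub_exp_neg_add (by linarith [phi_nonneg hc.le]),
    two_mul_cosh_phi_add_sub_two hc.le]
end
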